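/- arXiv:2406.00963 — 3 statements merged into one kernel-verified Lean document; each statement's English description precedes it below -/
import Mathlib

section
/- Let (I_1,…,I_r), (I'_1,…,I'_r), (J_1,…,J_q), (J'_1,…,J'_q) be sequences of weakly increasing tuples with entries in {1,…,n}, with |I_k| = |I'_k|, |J_k| = |J'_k|, satisfying the multiset equalities I_1 ⊎ ⋯ ⊎ I_r = J_1 ⊎ ⋯ ⊎ J_q and I'_1 ⊎ ⋯ ⊎ I'_r = J'_1 ⊎ ⋯ ⊎ J'_q. Define n×n nonnegative-integer matrices C = (c_{i,j}) and D = (d_{i,j}) by c_{i,j} = ∑_k #{l : the l-th entry of I_k is i and the l-th entry of I'_k is j} and d_{i,j} = ∑_k #{l : the l-th entry of J_k is i and the l-th entry of J'_k is j}. Then there exists B ∈ ℝ such that ∏_{k=1}^r per(A_{I_k,I'_k}) ≤ B·∏_{k=1}^q per(A_{J_k,J'_k}) for every totally positive n×n matrix A if and only if C* ≤ D* in the componentwise order; moreover, when C* ≤ D*, the bound B = |I_1|!·|I_2|!⋯|I_r|! works, i.e., ∏_{k=1}^r per(A_{I_k,I'_k}) ≤ |I_1|!⋯|I_r|!·∏_{k=1}^q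 per(A_{J_k,J'_k}) for every totally positive n×n matrix A. -/
open Matrix BigOperators

/-- The permanent of a square real matrix. -/
def per {r : ℕ} (B : Matrix (Fin r) (Fin r) ℝ) : ℝ :=
  ∑ σ : Equiv.Perm (Fin r), ∏ i, B i (σ i)

/-- An `n × n` real matrix is totally positive if all its minors are positive. -/
def TotallyPos {n : ℕ} (A : Matrix (Fin n) (Fin n) ℝ) : Prop :=
  ∀ (k : ℕ) (f g : Fin k → Fin n), StrictMono f → StrictMono g →
    0 < (A.submatrix f g).det

/-- `cstar C i j = ∑_{a ≤ i, b ≤ j} C a b`. -/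
def cstar {n : ℕ} (C : Matrix (Fin n) (Fin n) ℕ) (i j : Fin n) : ℕ :=
  ∑ a ∈ Finset.Iic i, ∑ b ∈ Finset.Iic j, C a b

/-!
Sufficiency. The `2 × 2` minors of a totally positive `A` are positive, so for weakly increasing
`M`, `O` the identity permutation gives the largest term of `per (A_{M,O})`; hence `per (A_{M,O})`
lies between `∏ l, A (m l) (o l)` and `|M|!` times it. Over all tuples these diagonal products
multiply to the monomials `∏ A ^ C` and `∏ A ^ D`, and `∏ A ^ C ≤ ∏ A ^ D` follows from
`C* ≤ D*` and the equal margins of `C` and `D` by two-dimensional summation by parts against the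
supermodular function `log A`.

Necessity. Test the bound on the totally positive Cauchy matrices `(t ^ α i + t ^ β j)⁻¹`,
which are `t ^ (-max (α i) (β j))` up to a factor in `[1/2, 1]`. Letting `t → ∞` gives
`∑ D ⬝ max (α, β) ≤ ∑ C ⬝ max (α, β)` for all strictly increasing `α`, `β`; with `α`, `β`
jumping by a huge step after `i₀`, `j₀` this reads `C*(i₀, j₀) ≤ D*(i₀, j₀)`.
-/

open Finset Equiv
open scoped Nat

def TwoMinorsNonneg {α β : Type*} [LinearOrder α] [LinearOrder β] (A : Matrix α β ℝ) : Prop :=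
  ∀ ⦃i k : α⦄ ⦃j l : β⦄, i ≤ k → j ≤ l → A i l * A k j ≤ A i j * A k l

theorem TotallyPos.pos {n : ℕ} {A : Matrix (Fin n) (Fin n) ℝ} (hA : TotallyPos A) (i j : Fin n) :
    0 < A i j := by
  have h := hA 1 ![i] ![j] (Subsingleton.strictMono _) (Subsingleton.strictMono _)
  rwa [Matrix.det_fin_one] at h

theorem TotallyPos.twoMinorsNonneg {n : ℕ} {A : Matrix (Fin n) (Fin n) ℝ} (hA : TotallyPos A) :
    TwoMinorsNonneg A := by
  intro i k j l hik hjl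
  rcases hik.eq_or_lt with rfl | hik
  · rw [mul_comm]
  rcases hjl.eq_or_lt with rfl | hjl
  · rw [mul_comm]
  have h := hA 2 ![i, k] ![j, l] (Fin.strictMono_iff_lt_succ.2 (by simpa using hik))
    (Fin.strictMono_iff_lt_succ.2 (by simpa using hjl))
  rw [Matrix.det_fin_two] at h
  simp only [Matrix.submatrix_apply, Matrix.cons_val_zero, Matrix.cons_val_one,
    Matrix.cons_val_fin_one, sub_pos] at h
  linarith

theorem prod_le_per_submatrix {α β : Type*} {A : Matrix α β ℝ} (h0 : ∀ i j, 0 ≤ A i j) {s : ℕ}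
    (m : Fin s → α) (o : Fin s → β) :
    ∏ i, A (m i) (o i) ≤ per (A.submatrix m o) :=
  single_le_sum (f := fun σ : Perm (Fin s) => ∏ i, A (m i) (o (σ i)))
    (fun _ _ => prod_nonneg fun _ _ => h0 _ _) (mem_univ 1)

theorem per_submatrix_pos {α β : Type*} {A : Matrix α β ℝ} (hpos : ∀ i j, 0 < A i j) {s : ℕ}
    (m : Fin s → α) (o : Fin s → β) : 0 < per (A.submatrix m o) :=
  (prod_pos fun _ _ => hpos _ _).trans_le (prod_le_per_submatrix (fun i j => (hpos i j).le) m o)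

theorem prod_le_prod_of_swap {ι : Type*} [Fintype ι] [DecidableEq ι] {f g : ι → ℝ} {a b : ι}
    (hab : a ≠ b) (hfg : ∀ i, i ≠ a → i ≠ b → f i = g i) (hg : ∀ i, 0 ≤ g i)
    (h : f a * f b ≤ g a * g b) : ∏ i, f i ≤ ∏ i, g i := by
  rw [← prod_mul_prod_compl {a, b} f, ← prod_mul_prod_compl {a, b} g, prod_pair hab,
    prod_pair hab, prod_congr rfl fun i hi => hfg i (by aesop) (by aesop)]
  exact mul_le_mul_of_nonneg_right h (prod_nonneg fun i _ => hg i)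

theorem Equiv.Perm.exists_apply_succ_eq_succ {s : ℕ} {σ : Perm (Fin (s + 1))} (hσ : σ 0 = 0) :
    ∃ τ : Perm (Fin s), ∀ i, σ i.succ = (τ i).succ := by
  obtain ⟨⟨p, τ⟩, rfl⟩ := Perm.decomposeFin.symm.surjective σ
  rw [Perm.decomposeFin_symm_apply_zero] at hσ
  subst hσ
  exact ⟨τ, fun i => by simp [Perm.decomposeFin_symm_apply_succ]⟩

section Rearrangement

variable {α β : Type*} [LinearOrder α] [LinearOrder β] {A : Matrix α β ℝ}

theorem TwoMinorsNonneg.prod_apply_perm_le (h0 : ∀ i j, 0 ≤ A i j) (hA : TwoMinorsNonneg A) :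
    ∀ {s : ℕ} {m : Fin s → α} {o : Fin s → β}, Monotone m → Monotone o →
      ∀ σ : Perm (Fin s), ∏ i, A (m i) (o (σ i)) ≤ ∏ i, A (m i) (o i)
  | 0, _, _, _, _, _ => by simp
  | s + 1, m, o, hm, ho, σ => by
    set p := σ.symm 0
    have hp : σ p = 0 := σ.apply_symm_apply 0
    set σ' := σ * swap 0 p
    have hσ'0 : σ' 0 = 0 := by simp [σ', hp]
    have hswap : ∏ i, A (m i) (o (σ i)) ≤ ∏ i, A (m i) (o (σ' i)) := by
      by_cases hp0 : p = 0
      · simp [σ', hp0]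
      refine prod_le_prod_of_swap (Ne.symm hp0) (fun i h0i hpi => ?_) (fun i => h0 _ _) ?_
      · simp [σ', swap_apply_of_ne_of_ne h0i hpi]
      · simpa [σ', hp] using hA (hm (Fin.zero_le p)) (ho (Fin.zero_le (σ 0)))
    obtain ⟨τ, hτ⟩ := Perm.exists_apply_succ_eq_succ hσ'0
    have ih := prod_apply_perm_le h0 hA (hm.comp (Fin.strictMono_succ.monotone))
      (ho.comp (Fin.strictMono_succ.monotone)) τ
    refine hswap.trans ?_
    rw [Fin.prod_univ_succ, Fin.prod_univ_succ, hσ'0]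
    simp only [hτ]
    exact mul_le_mul_of_nonneg_left ih (h0 _ _)

theorem TwoMinorsNonneg.per_submatrix_le (h0 : ∀ i j, 0 ≤ A i j) (hA : TwoMinorsNonneg A)
    {s : ℕ} {m : Fin s → α} {o : Fin s → β} (hm : Monotone m) (ho : Monotone o) :
    per (A.submatrix m o) ≤ s ! * ∏ i, A (m i) (o i) := by
  calc per (A.submatrix m o) ≤ ∑ _σ : Perm (Fin s), ∏ i, A (m i) (o i) :=
        sum_le_sum fun σ _ => hA.prod_apply_perm_le h0 hm ho σ
    _ = s ! * ∏ i, A (m i) (o i) := by simp [Fintype.card_perm]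

end Rearrangement

section PairCount

variable {κ : Type*} [Fintype κ] {ι : κ → Type*} [∀ k, Fintype (ι k)]
  {α β : Type*} [DecidableEq α] [DecidableEq β]

def pairCount (I : (k : κ) → ι k → α) (I' : (k : κ) → ι k → β) : Matrix α β ℕ :=
  fun i j => ∑ k, #{l | I k l = i ∧ I' k l = j}

variable (I : (k : κ) → ι k → α) (I' : (k : κ) → ι k → β)

theorem sum_pairCount_right [Fintype β] (i : α) :
    ∑ j, pairCount I I' i j = ∑ k, #{l | I k l = i} := by
  simp only [pairCount]
  rw [sum_comm]
  refine sum_congr rfl fun k _ => ?_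
  rw [card_eq_sum_card_fiberwise (f := I' k) (t := univ) fun _ _ => mem_univ _]
  simp only [filter_filter]

theorem sum_pairCount_left [Fintype α] (j : β) :
    ∑ i, pairCount I I' i j = ∑ k, #{l | I' k l = j} := by
  simp only [pairCount]
  rw [sum_comm]
  refine sum_congr rfl fun k _ => ?_
  rw [card_eq_sum_card_fiberwise (f := I k) (t := univ) fun _ _ => mem_univ _]
  simp only [filter_filter, and_comm]

theorem prod_prod_eq_prod_prod_pow_pairCount [Fintype α] [Fintype β] {M : Type*} [CommMonoid M]
    (f : Matrix α β M) :
    ∏ k, ∏ l, f (I k l) (I' k l) = ∏ i, ∏ j, f i j ^ pairCount I I' i j := by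
  have hfiber : ∀ k, ∏ l, f (I k l) (I' k l) = ∏ i, ∏ j, f i j ^ #{l | I k l = i ∧ I' k l = j} := by
    intro k
    rw [← prod_fiberwise' univ (fun l => (I k l, I' k l)) fun p => f p.1 p.2,
      Fintype.prod_prod_type]
    simp [Prod.ext_iff]
  simp only [hfiber, pairCount, ← prod_pow_eq_pow_sum]
  rw [prod_comm]
  exact prod_congr rfl fun i _ => prod_comm

end PairCount

theorem sum_mul_le_sum_mul_of_sum_Iic_nonneg :
    ∀ {n : ℕ} (r f : Fin n → ℝ), Antitone f → (∀ i, 0 ≤ ∑ a ∈ Iic i, r a) →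
      ∀ y, (∀ i, y ≤ f i) → (∑ i, r i) * y ≤ ∑ i, r i * f i
  | 0, _, _, _, _, _, _ => by simp
  | n + 1, r, f, hf, hr, y, hy => by
    have ih := sum_mul_le_sum_mul_of_sum_Iic_nonneg (r ∘ Fin.castSucc) (f ∘ Fin.castSucc)
      (hf.comp_monotone Fin.strictMono_castSucc.monotone) (fun i => by
        simpa [Fin.sum_Iic_castSucc] using hr i.castSucc) (f (Fin.last n))
      (fun i => hf (Fin.le_last _))
    have htotal : 0 ≤ ∑ i, r i := by simpa [← Fin.top_eq_last] using hr (Fin.last n)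
    calc (∑ i, r i) * y ≤ (∑ i, r i) * f (Fin.last n) := mul_le_mul_of_nonneg_left (hy _) htotal
      _ = (∑ i : Fin n, r i.castSucc) * f (Fin.last n) + r (Fin.last n) * f (Fin.last n) := by
          rw [Fin.sum_univ_castSucc, add_mul]
      _ ≤ ∑ i : Fin n, r i.castSucc * f i.castSucc + r (Fin.last n) * f (Fin.last n) :=
          add_le_add ih le_rfl
      _ = ∑ i, r i * f i := (Fin.sum_univ_castSucc fun i => r i * f i).symm

theorem sum_mul_le_sum_sum_mul_of_sum_Iic_Iic_nonneg {n : ℕ} :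
    ∀ {m : ℕ} (E L : Fin m → Fin n → ℝ), (∀ i, ∑ j, E i j = 0) →
      (∀ i j, 0 ≤ ∑ a ∈ Iic i, ∑ b ∈ Iic j, E a b) →
      (∀ ⦃i k⦄ ⦃j l⦄, i ≤ k → j ≤ l → L i l + L k j ≤ L i j + L k l) →
      ∀ y : Fin n → ℝ, (∀ i, Antitone (L i - y)) →
        ∑ j, (∑ i, E i j) * y j ≤ ∑ i, ∑ j, E i j * L i j
  | 0, _, _, _, _, _, _, _ => by simp
  | m + 1, E, L, hrow, hE, hL, y, hy => by
    -- The rows above the last are compared with `L (last m)` by induction; the remaining error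
    -- pairs the column sums with the antitone `L (last m) - y`, handled by the 1D lemma.
    have ih := sum_mul_le_sum_sum_mul_of_sum_Iic_Iic_nonneg (E ∘ Fin.castSucc)
      (L ∘ Fin.castSucc) (fun i => hrow _)
      (fun i j => by simpa [Fin.sum_Iic_castSucc] using hE i.castSucc j)
      (fun i k j l hik hjl => hL (Fin.castSucc_le_castSucc_iff.2 hik) hjl) (L (Fin.last m))
      (fun i a b hab => by
        have := hL (Fin.le_last i.castSucc) hab
        simp only [Pi.sub_apply, Function.comp_apply]
        linarith)
    have hlast : 0 ≤ ∑ j, (∑ i, E i j) * (L (Fin.last m) - y) j := by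
      obtain ⟨y₀, hy₀⟩ := Finite.bddBelow_range (L (Fin.last m) - y)
      have htotal : ∑ j, ∑ i, E i j = 0 := by
        rw [sum_comm]
        exact sum_eq_zero fun i _ => hrow i
      simpa [htotal] using sum_mul_le_sum_mul_of_sum_Iic_nonneg (fun j => ∑ i, E i j) _
        (hy (Fin.last m)) (fun j => by
          rw [sum_comm]
          simpa [← Fin.top_eq_last] using hE (Fin.last m) j)
        y₀ (fun j => hy₀ ⟨j, rfl⟩)
    simp only [Function.comp_apply] at ih
    simp only [Pi.sub_apply, mul_sub, sum_sub_distrib, sub_nonneg] at hlast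
    rw [Fin.sum_univ_castSucc]
    calc ∑ j, (∑ i, E i j) * y j
        ≤ ∑ j, (∑ i, E i j) * L (Fin.last m) j := hlast
      _ = ∑ j, (∑ i : Fin m, E i.castSucc j) * L (Fin.last m) j
            + ∑ j, E (Fin.last m) j * L (Fin.last m) j := by
          simp only [Fin.sum_univ_castSucc, add_mul, sum_add_distrib]
      _ ≤ _ := by gcongr

theorem TwoMinorsNonneg.log_add_log_le {α β : Type*} [LinearOrder α] [LinearOrder β]
    {A : Matrix α β ℝ} (hpos : ∀ i j, 0 < A i j) (hA : TwoMinorsNonneg A) ⦃i k : α⦄ ⦃j l : β⦄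
    (hik : i ≤ k) (hjl : j ≤ l) :
    Real.log (A i l) + Real.log (A k j) ≤ Real.log (A i j) + Real.log (A k l) := by
  rw [← Real.log_mul (hpos _ _).ne' (hpos _ _).ne', ← Real.log_mul (hpos _ _).ne' (hpos _ _).ne']
  exact Real.log_le_log (mul_pos (hpos _ _) (hpos _ _)) (hA hik hjl)

theorem TwoMinorsNonneg.prod_prod_pow_le_of_cstar_le {n : ℕ} {A : Matrix (Fin n) (Fin n) ℝ}
    (hpos : ∀ i j, 0 < A i j) (hA : TwoMinorsNonneg A) {C D : Matrix (Fin n) (Fin n) ℕ}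
    (hrow : ∀ i, ∑ j, C i j = ∑ j, D i j) (hcol : ∀ j, ∑ i, C i j = ∑ i, D i j)
    (hcs : ∀ i j, cstar C i j ≤ cstar D i j) :
    ∏ i, ∏ j, A i j ^ C i j ≤ ∏ i, ∏ j, A i j ^ D i j := by
  obtain _ | n := n
  · simp
  have hprod_pos (E : Matrix (Fin (n + 1)) (Fin (n + 1)) ℕ) : 0 < ∏ i, ∏ j, A i j ^ E i j :=
    prod_pos fun i _ => prod_pos fun j _ => pow_pos (hpos i j) _
  have hlog (E : Matrix (Fin (n + 1)) (Fin (n + 1)) ℕ) :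
      Real.log (∏ i, ∏ j, A i j ^ E i j) = ∑ i, ∑ j, E i j * Real.log (A i j) := by
    rw [Real.log_prod (f := fun i => ∏ j, A i j ^ E i j)
      fun i _ => (prod_pos fun j _ => pow_pos (hpos i j) _).ne']
    refine sum_congr rfl fun i _ => ?_
    rw [Real.log_prod (f := fun j => A i j ^ E i j) fun j _ => (pow_pos (hpos i j) _).ne']
    simp [Real.log_pow]
  have key := sum_mul_le_sum_sum_mul_of_sum_Iic_Iic_nonneg (fun i j => (D i j : ℝ) - C i j)
    (fun i j => Real.log (A i j))
    (fun i => by simp [sum_sub_distrib, ← Nat.cast_sum, hrow])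
    (fun i j => by
      simp only [sum_sub_distrib, sub_nonneg, ← Nat.cast_sum]
      exact_mod_cast hcs i j)
    (hA.log_add_log_le hpos) (fun j => Real.log (A (Fin.last n) j))
    (fun i a b hab => by
      have := hA.log_add_log_le hpos (Fin.le_last i) hab
      simp only [Pi.sub_apply]
      linarith)
  have hcol' : ∀ j, ∑ i, ((D i j : ℝ) - C i j) = 0 := fun j => by
    simp [sum_sub_distrib, ← Nat.cast_sum, hcol]
  rw [← Real.log_le_log_iff (hprod_pos C) (hprod_pos D), hlog, hlog, ← sub_nonneg]
  simpa [hcol', sub_mul, sum_sub_distrib] using key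

theorem TwoMinorsNonneg.prod_per_le_of_cstar_le {n : ℕ} {A : Matrix (Fin n) (Fin n) ℝ}
    (hpos : ∀ i j, 0 < A i j) (hA : TwoMinorsNonneg A) {κ κ' : Type*} [Fintype κ] [Fintype κ']
    {lI : κ → ℕ} {lJ : κ' → ℕ} {I I' : (k : κ) → Fin (lI k) → Fin n}
    {J J' : (k : κ') → Fin (lJ k) → Fin n} (hI : ∀ k, Monotone (I k)) (hI' : ∀ k, Monotone (I' k))
    (hrow : ∀ i, ∑ j, pairCount I I' i j = ∑ j, pairCount J J' i j)
    (hcol : ∀ j, ∑ i, pairCount I I' i j = ∑ i, pairCount J J' i j)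
    (hcs : ∀ i j, cstar (pairCount I I') i j ≤ cstar (pairCount J J') i j) :
    ∏ k, per (A.submatrix (I k) (I' k)) ≤
      (∏ k, ((lI k)! : ℝ)) * ∏ k, per (A.submatrix (J k) (J' k)) := by
  have h0 : ∀ i j, 0 ≤ A i j := fun i j => (hpos i j).le
  calc ∏ k, per (A.submatrix (I k) (I' k))
      ≤ ∏ k, ((lI k)! * ∏ l, A (I k l) (I' k l)) :=
        prod_le_prod (fun k _ => (prod_nonneg fun l _ => h0 _ _).trans
          (prod_le_per_submatrix h0 _ _)) fun k _ => hA.per_submatrix_le h0 (hI k) (hI' k)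
    _ = (∏ k, ((lI k)! : ℝ)) * ∏ i, ∏ j, A i j ^ pairCount I I' i j := by
        rw [prod_mul_distrib, prod_prod_eq_prod_prod_pow_pairCount]
    _ ≤ (∏ k, ((lI k)! : ℝ)) * ∏ i, ∏ j, A i j ^ pairCount J J' i j := by
        gcongr ?_ * ?_
        exact hA.prod_prod_pow_le_of_cstar_le hpos hrow hcol hcs
    _ = (∏ k, ((lI k)! : ℝ)) * ∏ k, ∏ l, A (J k l) (J' k l) := by
        rw [prod_prod_eq_prod_prod_pow_pairCount]
    _ ≤ (∏ k, ((lI k)! : ℝ)) * ∏ k, per (A.submatrix (J k) (J' k)) := by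
        gcongr ?_ * ?_
        exact prod_le_prod (fun k _ => prod_nonneg fun l _ => h0 _ _)
          fun k _ => prod_le_per_submatrix h0 _ _

theorem det_cauchy_pos : ∀ {s : ℕ} {x y : Fin s → ℝ}, StrictMono x → StrictMono y →
    (∀ i j, 0 < x i + y j) → 0 < (Matrix.of fun i j => (x i + y j)⁻¹).det
  | 0, _, _, _, _, _ => by simp
  | s + 1, x, y, hx, hy, hxy => by
    set M : Matrix (Fin (s + 1)) (Fin (s + 1)) ℝ := Matrix.of fun i j => (x i + y j)⁻¹
    -- Clear the first column below the pivot; the remaining block is a rescaled Cauchy matrix.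
    set c : Fin (s + 1) → ℝ := Fin.cons 0 fun i => (x 0 + y 0) / (x i.succ + y 0)
    set N : Matrix (Fin (s + 1)) (Fin (s + 1)) ℝ := Matrix.of fun i j => M i j - c i * M 0 j
    have hMN : M.det = N.det :=
      Matrix.det_eq_of_forall_row_eq_smul_add_const c 0 rfl fun i j => by simp [N, c]
    have hcol : ∀ i : Fin s, N i.succ 0 = 0 := fun i => by
      have := hxy i.succ 0
      have := hxy 0 0
      simp only [Matrix.of_apply, Fin.cons_succ, N, M, c]
      field_simp
      ring
    set d : Fin s → ℝ := fun i => (x i.succ - x 0) / (x i.succ + y 0)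
    set g : Fin s → ℝ := fun j => (y j.succ - y 0) / (x 0 + y j.succ)
    set K : Matrix (Fin s) (Fin s) ℝ := Matrix.of fun i j => (x i.succ + y j.succ)⁻¹
    have hblock : N.submatrix Fin.succ Fin.succ =
        Matrix.of fun i j => d i * Matrix.of (fun i j => g j * K i j) i j := by
      ext i j
      have := hxy i.succ j.succ
      have := hxy i.succ 0
      have := hxy 0 j.succ
      have := hxy 0 0
      simp only [Matrix.of_apply, Matrix.submatrix_apply, Fin.cons_succ, N, M, c, d, g, K]
      field_simp
      ring
    have hsub : 0 < (N.submatrix Fin.succ Fin.succ).det := by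
      rw [hblock, Matrix.det_mul_column, Matrix.det_mul_row]
      have hd : ∀ i, 0 < d i := fun i => div_pos (sub_pos.2 (hx (Fin.succ_pos i))) (hxy _ _)
      have hg : ∀ j, 0 < g j := fun j => div_pos (sub_pos.2 (hy (Fin.succ_pos j))) (hxy _ _)
      have hK : 0 < K.det := det_cauchy_pos (hx.comp Fin.strictMono_succ)
        (hy.comp Fin.strictMono_succ) fun i j => hxy i.succ j.succ
      exact mul_pos (prod_pos fun i _ => hd i) (mul_pos (prod_pos fun j _ => hg j) hK)
    rw [hMN, Matrix.det_succ_column_zero, Fin.sum_univ_succ]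
    simp only [hcol, zero_mul, mul_zero, sum_const_zero, add_zero]
    have h00 : N 0 0 = (x 0 + y 0)⁻¹ := by simp [N, M, c]
    simpa [h00, Fin.succAbove_zero] using mul_pos (inv_pos.2 (hxy 0 0)) hsub

theorem totallyPos_cauchy {n : ℕ} {x y : Fin n → ℝ} (hx : StrictMono x) (hy : StrictMono y)
    (hxy : ∀ i j, 0 < x i + y j) : TotallyPos (Matrix.of fun i j => (x i + y j)⁻¹) :=
  fun _ _ _ hf hg => det_cauchy_pos (hx.comp hf) (hy.comp hg) fun _ _ => hxy _ _

theorem cstar_add_sum_sum_ite {n : ℕ} (E : Matrix (Fin n) (Fin n) ℕ) (i₀ j₀ : Fin n) :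
    cstar E i₀ j₀ + ∑ i, ∑ j, (if i ≤ i₀ ∧ j ≤ j₀ then 0 else E i j) = ∑ i, ∑ j, E i j := by
  have h : cstar E i₀ j₀ = ∑ i, ∑ j, if i ≤ i₀ ∧ j ≤ j₀ then E i j else 0 := by
    simp [cstar, ite_and, ← sum_filter, filter_ge_eq_Iic]
  rw [h, ← sum_add_distrib]
  refine sum_congr rfl fun i _ => ?_
  rw [← sum_add_distrib]
  exact sum_congr rfl fun j _ => by split_ifs <;> simp

theorem cstar_le_of_forall_strictMono {n : ℕ} {C D : Matrix (Fin n) (Fin n) ℕ}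
    (hN : ∑ i, ∑ j, C i j = ∑ i, ∑ j, D i j)
    (h : ∀ α β : Fin n → ℕ, StrictMono α → StrictMono β →
      ∑ i, ∑ j, D i j * max (α i) (β j) ≤ ∑ i, ∑ j, C i j * max (α i) (β j))
    (i₀ j₀ : Fin n) : cstar C i₀ j₀ ≤ cstar D i₀ j₀ := by
  -- With a huge step `K` after `i₀` and `j₀`, `max (α i) (β j)` is `K` times the indicator of
  -- the complement of the quadrant `[0, i₀] × [0, j₀]`, up to an error less than `n`.
  set K := n * ∑ i, ∑ j, C i j + 1
  set α : Fin n → ℕ := fun i => K * (if i₀ < i then 1 else 0) + i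
  set β : Fin n → ℕ := fun j => K * (if j₀ < j then 1 else 0) + j
  have hα : StrictMono α := fun a b hab => by
    have : i₀ < a → i₀ < b := fun h => h.trans hab
    simp only [α, Fin.lt_def] at *
    split_ifs <;> omega
  have hβ : StrictMono β := fun a b hab => by
    have : j₀ < a → j₀ < b := fun h => h.trans hab
    simp only [β, Fin.lt_def] at *
    split_ifs <;> omega
  set χ : Fin n → Fin n → ℕ := fun i j => if i ≤ i₀ ∧ j ≤ j₀ then 0 else 1
  have hlow : ∀ i j, K * χ i j ≤ max (α i) (β j) := fun i j => by
    simp only [χ, α, β, not_lt.symm]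
    split_ifs <;> omega
  have hupp : ∀ i j, max (α i) (β j) ≤ K * χ i j + n := fun i j => by
    have := i.isLt
    have := j.isLt
    simp only [χ, α, β, not_lt.symm]
    split_ifs <;> omega
  have hχ (E : Matrix (Fin n) (Fin n) ℕ) :
      ∑ i, ∑ j, E i j * χ i j = ∑ i, ∑ j, (if i ≤ i₀ ∧ j ≤ j₀ then 0 else E i j) :=
    sum_congr rfl fun i _ => sum_congr rfl fun j _ => by simp only [χ]; split_ifs <;> simp
  have hD : K * ∑ i, ∑ j, D i j * χ i j ≤ ∑ i, ∑ j, D i j * max (α i) (β j) := by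
    simp only [mul_sum]
    exact sum_le_sum fun i _ => sum_le_sum fun j _ => by
      nlinarith [hlow i j]
  have hC : ∑ i, ∑ j, C i j * max (α i) (β j) ≤
      K * ∑ i, ∑ j, C i j * χ i j + n * ∑ i, ∑ j, C i j := by
    simp only [mul_sum, ← sum_add_distrib]
    exact sum_le_sum fun i _ => sum_le_sum fun j _ => by
      nlinarith [hupp i j]
  have hsplitC := cstar_add_sum_sum_ite C i₀ j₀
  have hsplitD := cstar_add_sum_sum_ite D i₀ j₀
  rw [← hχ] at hsplitC hsplitD
  have hchain := (hD.trans (h α β hα hβ)).trans hC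
  by_contra! hlt
  have hPCD : ∑ i, ∑ j, C i j * χ i j + 1 ≤ ∑ i, ∑ j, D i j * χ i j := by omega
  have := Nat.mul_le_mul_left K hPCD
  rw [mul_add_one] at this
  omega

theorem le_of_forall_pow_le_mul_pow {a b : ℕ} {c : ℝ} (h : ∀ t : ℝ, 1 < t → t ^ a ≤ c * t ^ b) :
    a ≤ b := by
  by_contra! hba
  set t : ℝ := max 2 (c + 1)
  have ht : 1 < t := lt_of_lt_of_le one_lt_two (le_max_left _ _)
  have hpow : t ^ b * t ≤ t ^ a := by
    rw [← pow_succ]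
    exact pow_le_pow_right₀ ht.le hba
  have : t ^ b * t ≤ t ^ b * c := by linarith [h t ht]
  have := le_of_mul_le_mul_left this (pow_pos (zero_lt_one.trans ht) b)
  linarith [le_max_right 2 (c + 1)]

theorem pow_max_le_add_pow {t : ℝ} (ht : 1 ≤ t) (a b : ℕ) : t ^ max a b ≤ t ^ a + t ^ b := by
  have := pow_pos (zero_lt_one.trans_le ht) a
  have := pow_pos (zero_lt_one.trans_le ht) b
  rcases le_total a b with hab | hab
  · rw [max_eq_right hab]; linarith
  · rw [max_eq_left hab]; linarith

theorem add_pow_le_two_mul_pow_max {t : ℝ} (ht : 1 ≤ t) (a b : ℕ) :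
    t ^ a + t ^ b ≤ 2 * t ^ max a b := by
  have := pow_le_pow_right₀ ht (le_max_left a b)
  have := pow_le_pow_right₀ ht (le_max_right a b)
  linarith

theorem sum_mul_max_le_of_forall_totallyPos {n : ℕ} {C D : Matrix (Fin n) (Fin n) ℕ} {c : ℝ}
    (h : ∀ A : Matrix (Fin n) (Fin n) ℝ, TotallyPos A →
      ∏ i, ∏ j, A i j ^ C i j ≤ c * ∏ i, ∏ j, A i j ^ D i j)
    {α β : Fin n → ℕ} (hα : StrictMono α) (hβ : StrictMono β) :
    ∑ i, ∑ j, D i j * max (α i) (β j) ≤ ∑ i, ∑ j, C i j * max (α i) (β j) := by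
  refine le_of_forall_pow_le_mul_pow (c := c * 2 ^ ∑ i, ∑ j, C i j) fun t ht => ?_
  have ht0 : 0 < t := zero_lt_one.trans ht
  set M : Matrix (Fin n) (Fin n) ℝ := Matrix.of fun i j => t ^ α i + t ^ β j
  have hM : ∀ i j, 0 < M i j := fun i j => by simp only [M, Matrix.of_apply]; positivity
  have hprod_pos (E : Matrix (Fin n) (Fin n) ℕ) : 0 < ∏ i, ∏ j, M i j ^ E i j :=
    prod_pos fun i _ => prod_pos fun j _ => pow_pos (hM i j) _
  have hpow (E : Matrix (Fin n) (Fin n) ℕ) :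
      ∏ i, ∏ j, (t ^ max (α i) (β j)) ^ E i j = t ^ ∑ i, ∑ j, E i j * max (α i) (β j) := by
    simp only [← pow_mul, prod_pow_eq_pow_sum, mul_comm]
  have hD : t ^ ∑ i, ∑ j, D i j * max (α i) (β j) ≤ ∏ i, ∏ j, M i j ^ D i j := by
    rw [← hpow]
    exact prod_le_prod (fun i _ => prod_nonneg fun j _ => by positivity) fun i _ =>
      prod_le_prod (fun j _ => by positivity) fun j _ =>
        pow_le_pow_left₀ (by positivity) (pow_max_le_add_pow ht.le _ _) _
  have hC : ∏ i, ∏ j, M i j ^ C i j ≤ 2 ^ (∑ i, ∑ j, C i j) *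
      t ^ ∑ i, ∑ j, C i j * max (α i) (β j) := by
    rw [← hpow, ← prod_pow_eq_pow_sum]
    simp only [← prod_pow_eq_pow_sum, ← prod_mul_distrib, ← mul_pow]
    exact prod_le_prod (fun i _ => prod_nonneg fun j _ => (pow_pos (hM i j) _).le) fun i _ =>
      prod_le_prod (fun j _ => (pow_pos (hM i j) _).le) fun j _ =>
        pow_le_pow_left₀ (hM i j).le (add_pow_le_two_mul_pow_max ht.le _ _) _
  have hMCD : ∏ i, ∏ j, M i j ^ D i j ≤ c * ∏ i, ∏ j, M i j ^ C i j := by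
    have hcauchy : (∏ i, ∏ j, M i j ^ C i j)⁻¹ ≤ c * (∏ i, ∏ j, M i j ^ D i j)⁻¹ := by
      simpa [M, inv_pow, prod_inv_distrib] using h _ (totallyPos_cauchy
        ((pow_right_strictMono₀ ht).comp hα) ((pow_right_strictMono₀ ht).comp hβ) hM)
    have hCpos := hprod_pos C
    have hDpos := hprod_pos D
    generalize ∏ i, ∏ j, M i j ^ C i j = P at hcauchy hCpos ⊢
    generalize ∏ i, ∏ j, M i j ^ D i j = Q at hcauchy hDpos ⊢
    rwa [← div_eq_mul_inv, inv_le_iff_one_le_mul₀ hCpos, div_mul_eq_mul_div,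
      one_le_div hDpos] at hcauchy
  have hc : 0 ≤ c := by
    by_contra! hc
    nlinarith [hprod_pos C, hprod_pos D]
  calc t ^ ∑ i, ∑ j, D i j * max (α i) (β j) ≤ c * ∏ i, ∏ j, M i j ^ C i j := hD.trans hMCD
    _ ≤ c * (2 ^ (∑ i, ∑ j, C i j) * t ^ ∑ i, ∑ j, C i j * max (α i) (β j)) := by gcongr
    _ = _ := by ring

theorem cstar_le_of_prod_per_le {n : ℕ} {κ κ' : Type*} [Fintype κ] [Fintype κ']
    {lI : κ → ℕ} {lJ : κ' → ℕ} {I I' : (k : κ) → Fin (lI k) → Fin n}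
    {J J' : (k : κ') → Fin (lJ k) → Fin n} (hJ : ∀ k, Monotone (J k)) (hJ' : ∀ k, Monotone (J' k))
    (hN : ∑ i, ∑ j, pairCount I I' i j = ∑ i, ∑ j, pairCount J J' i j) {B : ℝ}
    (hB : ∀ A : Matrix (Fin n) (Fin n) ℝ, TotallyPos A →
      ∏ k, per (A.submatrix (I k) (I' k)) ≤ B * ∏ k, per (A.submatrix (J k) (J' k)))
    (i j : Fin n) : cstar (pairCount I I') i j ≤ cstar (pairCount J J') i j := by
  refine cstar_le_of_forall_strictMono hN (fun α β hα hβ =>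
    sum_mul_max_le_of_forall_totallyPos (c := B * ∏ k, ((lJ k)! : ℝ)) (fun A hA => ?_) hα hβ) i j
  have h0 : ∀ i j, 0 ≤ A i j := fun i j => (hA.pos i j).le
  have hperI : 0 < ∏ k, per (A.submatrix (I k) (I' k)) :=
    prod_pos fun k _ => per_submatrix_pos hA.pos _ _
  have hperJ : 0 < ∏ k, per (A.submatrix (J k) (J' k)) :=
    prod_pos fun k _ => per_submatrix_pos hA.pos _ _
  have hB0 : 0 ≤ B := (pos_of_mul_pos_left (hperI.trans_le (hB A hA)) hperJ.le).le
  calc ∏ i, ∏ j, A i j ^ pairCount I I' i j = ∏ k, ∏ l, A (I k l) (I' k l) :=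
        (prod_prod_eq_prod_prod_pow_pairCount I I' A).symm
    _ ≤ ∏ k, per (A.submatrix (I k) (I' k)) :=
        prod_le_prod (fun k _ => prod_nonneg fun l _ => h0 _ _)
          fun k _ => prod_le_per_submatrix h0 _ _
    _ ≤ B * ∏ k, per (A.submatrix (J k) (J' k)) := hB A hA
    _ ≤ B * ∏ k, ((lJ k)! * ∏ l, A (J k l) (J' k l)) := by
        gcongr ?_ * ?_
        exact prod_le_prod (fun k _ => (per_submatrix_pos hA.pos _ _).le)
          fun k _ => hA.twoMinorsNonneg.per_submatrix_le h0 (hJ k) (hJ' k)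
    _ = (B * ∏ k, ((lJ k)! : ℝ)) * ∏ i, ∏ j, A i j ^ pairCount J J' i j := by
        rw [prod_mul_distrib, prod_prod_eq_prod_prod_pow_pairCount, mul_assoc]

theorem stmt5 (n r q : ℕ) (lI : Fin r → ℕ) (lJ : Fin q → ℕ)
    (I I' : (k : Fin r) → Fin (lI k) → Fin n)
    (J J' : (k : Fin q) → Fin (lJ k) → Fin n)
    (hI : ∀ k, Monotone (I k)) (hI' : ∀ k, Monotone (I' k))
    (hJ : ∀ k, Monotone (J k)) (hJ' : ∀ k, Monotone (J' k))
    (hmulti : ∀ i : Fin n,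
      ((∑ k, (Finset.univ.filter fun l => I k l = i).card) =
        ∑ k, (Finset.univ.filter fun l => J k l = i).card) ∧
      ((∑ k, (Finset.univ.filter fun l => I' k l = i).card) =
        ∑ k, (Finset.univ.filter fun l => J' k l = i).card))
    (C D : Matrix (Fin n) (Fin n) ℕ)
    (hC : ∀ i j, C i j = ∑ k, (Finset.univ.filter fun l => I k l = i ∧ I' k l = j).card)
    (hD : ∀ i j, D i j = ∑ k, (Finset.univ.filter fun l => J k l = i ∧ J' k l = j).card) :
    ((∃ B : ℝ, ∀ A : Matrix (Fin n) (Fin n) ℝ, TotallyPos A →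
        (∏ k, per (A.submatrix (I k) (I' k))) ≤
          B * ∏ k, per (A.submatrix (J k) (J' k))) ↔
      (∀ i j, cstar C i j ≤ cstar D i j)) ∧
    ((∀ i j, cstar C i j ≤ cstar D i j) →
      ∀ A : Matrix (Fin n) (Fin n) ℝ, TotallyPos A →
        (∏ k, per (A.submatrix (I k) (I' k))) ≤
          (∏ k, (Nat.factorial (lI k) : ℝ)) * ∏ k, per (A.submatrix (J k) (J' k))) := by
  obtain rfl : C = pairCount I I' := Matrix.ext hC
  obtain rfl : D = pairCount J J' := Matrix.ext hD
  have hrow : ∀ i, ∑ j, pairCount I I' i j = ∑ j, pairCount J J' i j := fun i => by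
    rw [sum_pairCount_right, sum_pairCount_right]
    exact (hmulti i).1
  have hcol : ∀ j, ∑ i, pairCount I I' i j = ∑ i, pairCount J J' i j := fun j => by
    rw [sum_pairCount_left, sum_pairCount_left]
    exact (hmulti j).2
  have hsuff (hcs : ∀ i j, cstar (pairCount I I') i j ≤ cstar (pairCount J J') i j)
      (A : Matrix (Fin n) (Fin n) ℝ) (hA : TotallyPos A) :=
    hA.twoMinorsNonneg.prod_per_le_of_cstar_le hA.pos hI hI' hrow hcol hcs
  exact ⟨⟨fun ⟨_, hB⟩ => cstar_le_of_prod_per_le hJ hJ' (sum_congr rfl fun i _ => hrow i) hB,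
    fun hcs => ⟨_, hsuff hcs⟩⟩, hsuff⟩
end

section
/- Let (I_1,…,I_r) and (J_1,…,J_q) be sequences of weakly increasing tuples with entries in {1,…,n} such that I_1 ⊎ ⋯ ⊎ I_r = J_1 ⊎ ⋯ ⊎ J_q as multisets (for each i ∈ {1,…,n}, the total number of entries equal to i among the I_k equals that among the J_k). Then for every totally positive n×n matrix A, (1/(|J_1|!⋯|J_q|!))·∏_{k=1}^q per(A_{J_k,J_k}) ≤ ∏_{k=1}^r per(A_{I_k,I_k}) ≤ |I_1|!⋯|I_r|!·∏_{k=1}^q per(A_{J_k,J_k}). -/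
/-!
The identity term dominates every term of the permanent of `A_{M,M}` for `M` weakly increasing:
the `2 × 2` minors of a totally positive matrix give `a_{xv} a_{yu} ≤ a_{xu} a_{yv}` for
`x ≤ y`, `u ≤ v`, so swapping two values of a permutation to remove an inversion does not decrease
its term. Hence `∏ a_{m_i m_i} ≤ per A_{M,M} ≤ |M|! ∏ a_{m_i m_i}`, and the multiset hypothesis
says exactly that the diagonal products on both sides of the theorem coincide.
-/

open Matrix BigOperators

section Permanent

variable {m : ℕ} {B : Matrix (Fin m) (Fin m) ℝ}

theorem prod_diag_le_per (hB₀ : ∀ i j, 0 ≤ B i j) : ∏ i, B i i ≤ per B :=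
  Finset.single_le_sum (f := fun σ : Equiv.Perm (Fin m) => ∏ i, B i (σ i))
    (fun σ _ => Finset.prod_nonneg fun i _ => hB₀ i (σ i)) (Finset.mem_univ 1)

variable (hB₀ : ∀ i j, 0 ≤ B i j)
  (hB : ∀ x y u v, x ≤ y → u ≤ v → B x v * B y u ≤ B x u * B y v)
include hB₀ hB

/-- With `a` the least point moved by `σ` and `σ b = a`, the witness `swap a (σ a) * σ` fixes
`a`, sends `b` to `σ a` and agrees with `σ` elsewhere; as `a ≤ b` and `a ≤ σ a`, `hB` compares
the two changed factors. -/
theorem exists_card_support_lt_and_prod_le (σ : Equiv.Perm (Fin m)) (hσ : σ ≠ 1) :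
    ∃ τ : Equiv.Perm (Fin m), τ.support.card < σ.support.card ∧
      ∏ i, B i (σ i) ≤ ∏ i, B i (τ i) := by
  have hne : σ.support.Nonempty := by
    rwa [Finset.nonempty_iff_ne_empty, Ne, Equiv.Perm.support_eq_empty_iff]
  set a := σ.support.min' hne
  have ha : σ a ≠ a := Equiv.Perm.mem_support.mp (Finset.min'_mem _ _)
  set b := σ.symm a
  have hσb : σ b = a := σ.apply_symm_apply a
  have hab : a ≠ b := fun h => ha (h ▸ hσb)
  have hab_le : a ≤ b :=
    Finset.min'_le _ _ (Equiv.Perm.mem_support.mpr (by rw [hσb]; exact hab))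
  have haσa : a ≤ σ a := Finset.min'_le _ _ (Equiv.Perm.apply_mem_support.mpr
    (Equiv.Perm.mem_support.mpr ha))
  refine ⟨Equiv.swap a (σ a) * σ, Equiv.Perm.card_support_swap_mul ha, ?_⟩
  have hrest : ∀ i ∈ ({a, b} : Finset (Fin m))ᶜ,
      B i (σ i) = B i ((Equiv.swap a (σ a) * σ) i) := by
    intro i hi
    simp only [Finset.mem_compl, Finset.mem_insert, Finset.mem_singleton, not_or] at hi
    rw [Equiv.Perm.mul_apply, Equiv.swap_apply_of_ne_of_ne
      (fun h => hi.2 (by rw [← hσb] at h; exact σ.injective h))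
      (fun h => hi.1 (σ.injective h))]
  rw [← Finset.prod_mul_prod_compl {a, b}, ← Finset.prod_mul_prod_compl {a, b}
    (fun i => B i ((Equiv.swap a (σ a) * σ) i)), Finset.prod_congr rfl hrest,
    Finset.prod_pair hab, Finset.prod_pair hab]
  refine mul_le_mul_of_nonneg_right ?_ (Finset.prod_nonneg fun i _ => hB₀ _ _)
  simpa [hσb] using hB a b a (σ a) hab_le haσa

theorem prod_perm_le_prod_diag (σ : Equiv.Perm (Fin m)) :
    ∏ i, B i (σ i) ≤ ∏ i, B i i := by
  by_cases hσ : σ = 1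
  · simp [hσ]
  obtain ⟨τ, hlt, hle⟩ := exists_card_support_lt_and_prod_le hB₀ hB σ hσ
  exact hle.trans (prod_perm_le_prod_diag τ)
termination_by σ.support.card

theorem per_le_factorial_mul_prod_diag : per B ≤ m.factorial * ∏ i, B i i := by
  calc per B ≤ ∑ _σ : Equiv.Perm (Fin m), ∏ i, B i i :=
        Finset.sum_le_sum fun σ _ => prod_perm_le_prod_diag hB₀ hB σ
    _ = m.factorial * ∏ i, B i i := by simp [Fintype.card_perm]

end Permanent

namespace TotallyPos

variable {n : ℕ} {A : Matrix (Fin n) (Fin n) ℝ}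

theorem pos_s7 (hA : TotallyPos A) (i j : Fin n) : 0 < A i j := by
  have h := hA 1 ![i] ![j] (Subsingleton.strictMono _) (Subsingleton.strictMono _)
  rwa [det_fin_one] at h

theorem mul_le_mul_of_le (hA : TotallyPos A) {x y u v : Fin n} (hxy : x ≤ y) (huv : u ≤ v) :
    A x v * A y u ≤ A x u * A y v := by
  rcases hxy.eq_or_lt with rfl | hxy
  · rw [mul_comm]
  rcases huv.eq_or_lt with rfl | huv
  · rw [mul_comm]
  have hpair : ∀ {s t : Fin n}, s < t → StrictMono ![s, t] := fun hst =>
    Fin.strictMono_iff_lt_succ.mpr fun i => by fin_cases i; simpa using hst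
  have h := hA 2 ![x, y] ![u, v] (hpair hxy) (hpair huv)
  rw [det_fin_two] at h
  simp only [submatrix_apply, Matrix.cons_val_zero, Matrix.cons_val_one] at h
  linarith

theorem prod_diag_le_per_submatrix (hA : TotallyPos A) {m : ℕ} (f : Fin m → Fin n) :
    ∏ i, A (f i) (f i) ≤ per (A.submatrix f f) :=
  prod_diag_le_per (B := A.submatrix f f) fun _ _ => (hA.pos_s7 _ _).le

theorem per_submatrix_le (hA : TotallyPos A) {m : ℕ} {f : Fin m → Fin n} (hf : Monotone f) :
    per (A.submatrix f f) ≤ m.factorial * ∏ i, A (f i) (f i) :=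
  per_le_factorial_mul_prod_diag (fun _ _ => (hA.pos_s7 _ _).le)
    fun _ _ _ _ hxy huv => hA.mul_le_mul_of_le (hf hxy) (hf huv)

variable {p : ℕ} {len : Fin p → ℕ}

theorem prod_prod_diag_le_prod_per (hA : TotallyPos A) (K : (k : Fin p) → Fin (len k) → Fin n) :
    ∏ k, ∏ l, A (K k l) (K k l) ≤ ∏ k, per (A.submatrix (K k) (K k)) :=
  Finset.prod_le_prod (fun _ _ => Finset.prod_nonneg fun _ _ => (hA.pos_s7 _ _).le)
    fun k _ => hA.prod_diag_le_per_submatrix (K k)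

theorem prod_per_le (hA : TotallyPos A) {K : (k : Fin p) → Fin (len k) → Fin n}
    (hK : ∀ k, Monotone (K k)) :
    ∏ k, per (A.submatrix (K k) (K k)) ≤
      (∏ k, ((len k).factorial : ℝ)) * ∏ k, ∏ l, A (K k l) (K k l) := by
  rw [← Finset.prod_mul_distrib]
  exact Finset.prod_le_prod
    (fun k _ => (Finset.prod_nonneg fun _ _ => (hA.pos_s7 _ _).le).trans
      (hA.prod_diag_le_per_submatrix (K k)))
    fun k _ => hA.per_submatrix_le (hK k)

end TotallyPos

theorem prod_prod_comp_eq_of_card_fiber_eq {α M : Type*} [Fintype α] [DecidableEq α]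
    [CommMonoid M] {r q : ℕ} {lI : Fin r → ℕ} {lJ : Fin q → ℕ}
    {I : (k : Fin r) → Fin (lI k) → α} {J : (k : Fin q) → Fin (lJ k) → α}
    (hmulti : ∀ i : α,
      (∑ k, (Finset.univ.filter fun l => I k l = i).card) =
        ∑ k, (Finset.univ.filter fun l => J k l = i).card)
    (g : α → M) :
    ∏ k, ∏ l, g (I k l) = ∏ k, ∏ l, g (J k l) := by
  have hfiber : ∀ {p : ℕ} (f : Fin p → α),
      ∏ l, g (f l) = ∏ i, g i ^ (Finset.univ.filter fun l => f l = i).card := fun f => by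
    rw [← Finset.prod_fiberwise Finset.univ f]
    exact Finset.prod_congr rfl fun i _ => Finset.prod_eq_pow_card fun l hl => by
      rw [(Finset.mem_filter.mp hl).2]
  simp only [hfiber]
  rw [Finset.prod_comm, Finset.prod_comm (s := Finset.univ (α := Fin q))]
  simp only [Finset.prod_pow_eq_pow_sum, hmulti]

theorem stmt7 (n r q : ℕ) (lI : Fin r → ℕ) (lJ : Fin q → ℕ)
    (I : (k : Fin r) → Fin (lI k) → Fin n)
    (J : (k : Fin q) → Fin (lJ k) → Fin n)
    (hI : ∀ k, Monotone (I k)) (hJ : ∀ k, Monotone (J k))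
    (hmulti : ∀ i : Fin n,
      (∑ k, (Finset.univ.filter fun l => I k l = i).card) =
        ∑ k, (Finset.univ.filter fun l => J k l = i).card) :
    ∀ A : Matrix (Fin n) (Fin n) ℝ, TotallyPos A →
      ((∏ k, (Nat.factorial (lJ k) : ℝ))⁻¹ * ∏ k, per (A.submatrix (J k) (J k))) ≤
          (∏ k, per (A.submatrix (I k) (I k))) ∧
      (∏ k, per (A.submatrix (I k) (I k))) ≤
        (∏ k, (Nat.factorial (lI k) : ℝ)) * ∏ k, per (A.submatrix (J k) (J k)) := by
  intro A hA
  have hdiag := prod_prod_comp_eq_of_card_fiber_eq hmulti fun i => A i i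
  have hfact : ∀ {p : ℕ} (len : Fin p → ℕ), 0 < ∏ k, ((len k).factorial : ℝ) :=
    fun len => Finset.prod_pos fun k _ => by positivity
  constructor
  · rw [inv_mul_le_iff₀ (hfact lJ)]
    calc ∏ k, per (A.submatrix (J k) (J k))
        ≤ (∏ k, ((lJ k).factorial : ℝ)) * ∏ k, ∏ l, A (J k l) (J k l) := hA.prod_per_le hJ
      _ ≤ _ := by
        rw [← hdiag]
        exact mul_le_mul_of_nonneg_left (hA.prod_prod_diag_le_prod_per I) (hfact lJ).le
  · calc ∏ k, per (A.submatrix (I k) (I k))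
        ≤ (∏ k, ((lI k).factorial : ℝ)) * ∏ k, ∏ l, A (I k l) (I k l) := hA.prod_per_le hI
      _ ≤ _ := by
        rw [hdiag]
        exact mul_le_mul_of_nonneg_left (hA.prod_prod_diag_le_prod_per J) (hfact lI).le
end

section
/- For every totally nonnegative 3×3 matrix A = (a_{i,j}), both 3·per(A_{{1,2},{1,2}})·a_{3,3} ≥ per(A) and 3·per(A_{{2,3},{2,3}})·a_{1,1} ≥ per(A) hold. -/
/-!
Expand both permanents. Besides the two products that appear on the right-hand side, `per A` has
four more terms, and each is dominated by one of those two products times `a₃₃` via a single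
`2 × 2` minor of `A` and the nonnegativity of the remaining entry; e.g. `a₁₁ a₂₃ a₃₂ ≤ a₁₁ a₂₂ a₃₃`.
The second inequality is the first one for the matrix with rows and columns both reversed, which
is again totally nonnegative.
-/

open Matrix BigOperators

/-- An `n × n` real matrix is totally nonnegative if all its minors are nonnegative. -/
def TotallyNonneg {n : ℕ} (A : Matrix (Fin n) (Fin n) ℝ) : Prop :=
  ∀ (k : ℕ) (f g : Fin k → Fin n), StrictMono f → StrictMono g →
    0 ≤ (A.submatrix f g).det

lemma per_fin_two (B : Matrix (Fin 2) (Fin 2) ℝ) : per B = B 0 0 * B 1 1 + B 0 1 * B 1 0 := by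
  rw [per, show (Finset.univ : Finset (Equiv.Perm (Fin 2))) = {1, Equiv.swap 0 1} by decide]
  simp +decide [Finset.sum_insert, Fin.prod_univ_two]

lemma per_fin_three (B : Matrix (Fin 3) (Fin 3) ℝ) : per B =
    B 0 0 * B 1 1 * B 2 2 + B 0 0 * B 1 2 * B 2 1 + B 0 1 * B 1 0 * B 2 2
    + B 0 1 * B 1 2 * B 2 0 + B 0 2 * B 1 0 * B 2 1 + B 0 2 * B 1 1 * B 2 0 := by
  rw [per, show (Finset.univ : Finset (Equiv.Perm (Fin 3))) =
    {1, Equiv.swap 1 2, Equiv.swap 0 1, Equiv.swap 0 1 * Equiv.swap 1 2,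
     Equiv.swap 1 2 * Equiv.swap 0 1, Equiv.swap 0 2} by decide]
  simp +decide [Finset.sum_insert, Fin.prod_univ_three, Equiv.swap_apply_def]
  ring

namespace TotallyNonneg

variable {n : ℕ} {A : Matrix (Fin n) (Fin n) ℝ}

theorem entry_nonneg (hA : TotallyNonneg A) (i j : Fin n) : 0 ≤ A i j := by
  have h := hA 1 ![i] ![j] (Subsingleton.strictMono _) (Subsingleton.strictMono _)
  rwa [det_fin_one] at h

theorem mul_le_mul_of_lt (hA : TotallyNonneg A) {i₁ i₂ j₁ j₂ : Fin n} (hi : i₁ < i₂)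
    (hj : j₁ < j₂) : A i₁ j₂ * A i₂ j₁ ≤ A i₁ j₁ * A i₂ j₂ := by
  have h := hA 2 ![i₁, i₂] ![j₁, j₂] (Fin.strictMono_iff_lt_succ.2 (by simpa using hi))
    (Fin.strictMono_iff_lt_succ.2 (by simpa using hj))
  rw [det_fin_two] at h
  simp only [submatrix_apply, cons_val_zero, cons_val_one] at h
  linarith

theorem submatrix_rev (hA : TotallyNonneg A) : TotallyNonneg (A.submatrix Fin.rev Fin.rev) := by
  intro k f g hf hg
  have hrev : ∀ h : Fin k → Fin n, StrictMono h → StrictMono (Fin.rev ∘ h ∘ Fin.rev) :=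
    fun h hh a b hab => Fin.rev_lt_rev.2 (hh (Fin.rev_lt_rev.2 hab))
  have h := hA k _ _ (hrev f hf) (hrev g hg)
  rw [← det_submatrix_equiv_self Fin.revPerm] at h
  convert h using 2
  ext
  simp

end TotallyNonneg

theorem TotallyNonneg.per_le_three_mul_per_mul_corner {A : Matrix (Fin 3) (Fin 3) ℝ}
    (hA : TotallyNonneg A) :
    per A ≤ 3 * (per (A.submatrix ![0, 1] ![0, 1]) * A 2 2) := by
  have bound : ∀ k l i₁ i₂ j₁ j₂ : Fin 3, i₁ < i₂ → j₁ < j₂ →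
      A k l * (A i₁ j₂ * A i₂ j₁) ≤ A k l * (A i₁ j₁ * A i₂ j₂) := fun k l _ _ _ _ hi hj =>
    mul_le_mul_of_nonneg_left (hA.mul_le_mul_of_lt hi hj) (hA.entry_nonneg k l)
  rw [per_fin_three, per_fin_two]
  simp only [submatrix_apply, cons_val_zero, cons_val_one]
  linarith [bound 0 0 1 2 1 2 (by decide) (by decide), bound 1 1 0 2 0 2 (by decide) (by decide),
    bound 0 1 1 2 0 2 (by decide) (by decide), bound 1 0 0 2 1 2 (by decide) (by decide)]

theorem stmt10 (A : Matrix (Fin 3) (Fin 3) ℝ) (hA : TotallyNonneg A) :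
    per A ≤ 3 * (per (A.submatrix ![0, 1] ![0, 1]) * A 2 2) ∧
    per A ≤ 3 * (per (A.submatrix ![1, 2] ![1, 2]) * A 0 0) := by
  refine ⟨hA.per_le_three_mul_per_mul_corner, ?_⟩
  have h := hA.submatrix_rev.per_le_three_mul_per_mul_corner
  simp only [per_fin_three, per_fin_two, submatrix_apply, cons_val_zero, cons_val_one,
    Fin.reduceRev] at h ⊢
  linarith
end
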